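/- For all natural numbers n and m with 0 < m < n, the last code word C_{n,m}[C(n,m) − 1] and the first code word C_{n,m}[0] differ in exactly two bit positions (their Hamming distance is 2). -/

import Mathlib

/-- The Gray-style code `C_{n,m}`: a list of binary strings (lists of Booleans,
`true` = 1, `false` = 0).  `C_{0,0}` is the one-element list containing the empty
string, `C_{n,0} = [0^n]`, `C_{n,n} = [1^n]` for `n > 0`, and for `0 < m < n`,
`C_{n,m}` is the concatenation of the list obtained by prepending `0` to every
string of `C_{n-1,m}` with the reverse of the list obtained by prepending `1` to
every string of `C_{n-1,m-1}`. -/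
def grayCode : ℕ → ℕ → List (List Bool)
  | 0, _ => [[]]
  | n + 1, 0 => [List.replicate (n + 1) false]
  | n + 1, m + 1 =>
    if m + 1 = n + 1 then [List.replicate (n + 1) true]
    else (grayCode n (m + 1)).map (List.cons false) ++
      ((grayCode n m).map (List.cons true)).reverse


/-- The Hamming distance between two (equal-length) binary strings: the number of
positions at which they differ. -/
def listHammingDist : List Bool → List Bool → ℕ
  | a :: as, b :: bs => (if a = b then 0 else 1) + listHammingDist as bs
  | _, _ => 0

/-!
The first word of `C_{n,m}` is `0^(n-m) 1^m`, by induction along the left branch of the recursion.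
For `0 < m < n` the last word of `C_{n,m}` is the last word of the reversed `1`-half, i.e. `1`
followed by the first word `0^(n-m) 1^(m-1)` of `C_{n-1,m-1}`. Writing `n - m = k + 1`, the two
words are `0 0^k 1 1^(m-1)` and `1 0^k 0 1^(m-1)`, which differ exactly in the first position and
in position `n - m`.
-/

@[simp]
lemma listHammingDist_cons (a b : Bool) (as bs : List Bool) :
    listHammingDist (a :: as) (b :: bs) = (if a = b then 0 else 1) + listHammingDist as bs :=
  rfl

@[simp]
lemma listHammingDist_self : ∀ l : List Bool, listHammingDist l l = 0
  | [] => rfl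
  | a :: as => by simp [listHammingDist_self as]

lemma listHammingDist_append :
    ∀ {a c : List Bool} (b d : List Bool), a.length = c.length →
      listHammingDist (a ++ b) (c ++ d) = listHammingDist a c + listHammingDist b d
  | [], [], _, _, _ => by simp [listHammingDist]
  | x :: a, y :: c, b, d, h => by
      simp only [List.cons_append, listHammingDist_cons,
        listHammingDist_append b d (Nat.succ.inj h), Nat.add_assoc]

lemma listHammingDist_rotate_block (k j : ℕ) :
    listHammingDist (true :: (List.replicate (k + 1) false ++ List.replicate j true))
      (List.replicate (k + 1) false ++ List.replicate (j + 1) true) = 2 := by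
  have hlast : true :: (List.replicate (k + 1) false ++ List.replicate j true) =
      true :: (List.replicate k false ++ false :: List.replicate j true) := by
    simp [List.replicate_succ']
  have hfirst : List.replicate (k + 1) false ++ List.replicate (j + 1) true =
      false :: (List.replicate k false ++ true :: List.replicate j true) := by
    simp [List.replicate_succ]
  rw [hlast, hfirst, listHammingDist_cons, listHammingDist_append _ _ rfl]
  simp

lemma grayCode_succ_succ {n m : ℕ} (h : m ≠ n) :
    grayCode (n + 1) (m + 1) =
      (grayCode n (m + 1)).map (List.cons false) ++
        ((grayCode n m).map (List.cons true)).reverse := by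
  rw [grayCode, if_neg (by omega)]

lemma grayCode_length : ∀ {n m : ℕ}, m ≤ n → (grayCode n m).length = n.choose m
  | 0, 0, _ => rfl
  | n + 1, 0, _ => by simp [grayCode]
  | n + 1, m + 1, h => by
      rcases eq_or_ne m n with rfl | hmn
      · simp [grayCode]
      · rw [grayCode_succ_succ hmn, Nat.choose_succ_succ', Nat.add_comm (n.choose m)]
        simp [grayCode_length (n := n) (m := m + 1) (by omega),
          grayCode_length (n := n) (m := m) (by omega)]

lemma grayCode_head? : ∀ {n m : ℕ}, m ≤ n →
    (grayCode n m).head? = some (List.replicate (n - m) false ++ List.replicate m true)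
  | 0, 0, _ => rfl
  | n + 1, 0, _ => by simp [grayCode]
  | n + 1, m + 1, h => by
      rcases eq_or_ne m n with rfl | hmn
      · simp [grayCode]
      · have hsub : n + 1 - (m + 1) = n - (m + 1) + 1 := by omega
        simp [grayCode_succ_succ hmn, grayCode_head? (n := n) (m := m + 1) (by omega), hsub,
          List.replicate_succ]

lemma grayCode_getLast? {n m : ℕ} (hm : 0 < m) (hmn : m < n) :
    (grayCode n m).getLast? =
      some (true :: (List.replicate (n - m) false ++ List.replicate (m - 1) true)) := by
  obtain ⟨n, rfl⟩ : ∃ n', n = n' + 1 := ⟨n - 1, by omega⟩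
  obtain ⟨m, rfl⟩ : ∃ m', m = m' + 1 := ⟨m - 1, by omega⟩
  simp [grayCode_succ_succ (by omega : m ≠ n), List.getLast?_append,
    grayCode_head? (n := n) (m := m) (by omega)]

/-- For all natural numbers `n` and `m` with `0 < m < n`, the last code word
`C_{n,m}[C(n,m) - 1]` and the first code word `C_{n,m}[0]` differ in exactly two
bit positions (Hamming distance `2`). -/
theorem grayCode_wraparound_hamming (n m : ℕ) (hm : 0 < m) (hmn : m < n) :
    listHammingDist ((grayCode n m).getD (n.choose m - 1) [])
      ((grayCode n m).getD 0 []) = 2 := by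
  rw [← grayCode_length hmn.le, List.getD_eq_getElem?_getD, List.getD_eq_getElem?_getD,
    ← List.getLast?_eq_getElem?, ← List.head?_eq_getElem?, grayCode_getLast? hm hmn,
    grayCode_head? hmn.le]
  obtain ⟨k, hk⟩ : ∃ k, n - m = k + 1 := ⟨n - m - 1, by omega⟩
  obtain ⟨j, rfl⟩ : ∃ j, m = j + 1 := ⟨m - 1, by omega⟩
  simpa [hk] using listHammingDist_rotate_block k j
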